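/- arXiv:2511.08234 — 2 statements merged into one kernel-verified Lean document; each statement's English description precedes it below -/
import Mathlib

section
/- Let d ≥ 2, let μ ∈ ℝ^d be a unit vector, let w ∈ (1/2, 1], let ξ be a random vector distributed according to the uniform probability measure on the unit sphere S^{d-1}, and let v = w·μ + (1 - w)·ξ (which is almost surely nonzero). Then the expected cosine similarity of the normalized mixture with the mean direction satisfies E[⟨v, μ⟩/‖v‖] ≥ w. -/
open MeasureTheory
open scoped RealInnerProductSpace

/-- For a unit vector `μ ∈ ℝ^d`, a mixing weight `w ∈ (1/2, 1]`, and `ξ` uniform on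
the unit sphere `S^{d-1}`, the GAC mixture `v = w·μ + (1-w)·ξ` (which is almost
surely nonzero) has expected cosine similarity with the mean direction at least `w`:
`E[⟨v, μ⟩/‖v‖] ≥ w`. -/
theorem gac_expected_cosine_similarity (d : ℕ) (hd : 2 ≤ d)
    (σd : Measure (EuclideanSpace ℝ (Fin d))) [IsProbabilityMeasure σd]
    (hsupp : σd (Metric.sphere (0 : EuclideanSpace ℝ (Fin d)) 1) = 1)
    (hinv : ∀ T : EuclideanSpace ℝ (Fin d) ≃ₗᵢ[ℝ] EuclideanSpace ℝ (Fin d),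
      σd.map T = σd)
    (μ : EuclideanSpace ℝ (Fin d)) (hμ : ‖μ‖ = 1)
    (w : ℝ) (hw0 : 1 / 2 < w) (hw1 : w ≤ 1) :
    (∫ ξ, ⟪w • μ + (1 - w) • ξ, μ⟫ / ‖w • μ + (1 - w) • ξ‖ ∂σd) ≥ w := by
  have hw0' : (0:ℝ) < 2*w - 1 := by linarith
  have hs : (0:ℝ) ≤ 1 - w := by linarith
  -- a.e. on the sphere
  have hae : ∀ᵐ ξ ∂σd, ‖ξ‖ = 1 := by
    have hmeas : MeasurableSet (Metric.sphere (0 : EuclideanSpace ℝ (Fin d)) 1) :=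
      (Metric.isClosed_sphere).measurableSet
    have : σd (Metric.sphere (0 : EuclideanSpace ℝ (Fin d)) 1)ᶜ = 0 := by
      rw [measure_compl hmeas (measure_ne_top _ _), hsupp, measure_univ]
      exact tsub_self 1
    filter_upwards [measure_eq_zero_iff_ae_notMem.mp this] with ξ hξ
    rw [← mem_sphere_zero_iff_norm]
    exact not_not.mp hξ
  -- continuity/measurability of the integrand
  have hcont2 : Continuous fun ξ : EuclideanSpace ℝ (Fin d) => w • μ + (1 - w) • ξ :=
    continuous_const.add (continuous_id.const_smul (1 - w))
  have hcont : Continuous fun ξ : EuclideanSpace ℝ (Fin d) => ⟪w • μ + (1 - w) • ξ, μ⟫ :=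
    Continuous.inner hcont2 continuous_const
  have hmeasf : AEStronglyMeasurable
      (fun ξ : EuclideanSpace ℝ (Fin d) => ⟪w • μ + (1 - w) • ξ, μ⟫ / ‖w • μ + (1 - w) • ξ‖) σd := by
    exact (hcont.measurable.div
      (continuous_norm.comp hcont2).measurable).aestronglyMeasurable
  -- inner expansion
  have hexp : ∀ ξ : EuclideanSpace ℝ (Fin d), ⟪w • μ + (1 - w) • ξ, μ⟫ = w + (1 - w) * ⟪ξ, μ⟫ := by
    intro ξ
    rw [inner_add_left, real_inner_smul_left, real_inner_smul_left,
      real_inner_self_eq_norm_sq, hμ]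
    ring
  -- pointwise facts on the sphere
  have hpt : ∀ ξ : EuclideanSpace ℝ (Fin d), ‖ξ‖ = 1 →
      (w + (1 - w) * ⟪ξ, μ⟫ ≤
        ⟪w • μ + (1 - w) • ξ, μ⟫ / ‖w • μ + (1 - w) • ξ‖ ∧
       ‖⟪w • μ + (1 - w) • ξ, μ⟫ / ‖w • μ + (1 - w) • ξ‖‖ ≤ 1) := by
    intro ξ hξ
    set v := w • μ + (1 - w) • ξ with hv
    have hip : |⟪ξ, μ⟫| ≤ 1 := by
      have := abs_real_inner_le_norm ξ μ
      rwa [hξ, hμ, one_mul] at this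
    have hnumlb : 2*w - 1 ≤ w + (1 - w) * ⟪ξ, μ⟫ := by
      nlinarith [abs_le.mp hip]
    have hnum : ⟪v, μ⟫ = w + (1 - w) * ⟪ξ, μ⟫ := hexp ξ
    have hvub : ‖v‖ ≤ 1 := by
      calc ‖v‖ ≤ ‖w • μ‖ + ‖(1-w) • ξ‖ := norm_add_le _ _
        _ = |w| + |1-w| := by
            rw [norm_smul, norm_smul, hμ, hξ, Real.norm_eq_abs, Real.norm_eq_abs]; ring
        _ = 1 := by rw [abs_of_pos (by linarith), abs_of_nonneg hs]; ring
    have hvlb : 2*w - 1 ≤ ‖v‖ := by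
      have key : ‖w • μ‖ - ‖(1-w) • ξ‖ ≤ ‖v‖ := by
        have := norm_sub_norm_le (w • μ) (-((1-w) • ξ))
        simp only [sub_neg_eq_add, norm_neg] at this
        exact this
      have heq : ‖w • μ‖ - ‖(1-w) • ξ‖ = w - (1-w) := by
        rw [norm_smul, norm_smul, hμ, hξ, Real.norm_eq_abs, Real.norm_eq_abs,
          abs_of_pos (by linarith : (0:ℝ) < w), abs_of_nonneg hs]; ring
      rw [heq] at key; linarith
    have hvpos : 0 < ‖v‖ := lt_of_lt_of_le hw0' hvlb
    have hnumpos : 0 < ⟪v, μ⟫ := by rw [hnum]; linarith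
    constructor
    · rw [hnum]
      rw [le_div_iff₀ hvpos]
      nlinarith
    · have hle : ⟪v, μ⟫ / ‖v‖ ≤ 1 := by
        rw [div_le_one hvpos]
        calc ⟪v, μ⟫ ≤ ‖v‖ * ‖μ‖ := real_inner_le_norm v μ
          _ = ‖v‖ := by rw [hμ, mul_one]
      have hge : 0 ≤ ⟪v, μ⟫ / ‖v‖ := le_of_lt (div_pos hnumpos hvpos)
      rw [Real.norm_eq_abs, abs_of_nonneg hge]; exact hle
  -- integrability
  have hintf : Integrable
      (fun ξ : EuclideanSpace ℝ (Fin d) => ⟪w • μ + (1 - w) • ξ, μ⟫ / ‖w • μ + (1 - w) • ξ‖) σd := by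
    refine Integrable.mono' (integrable_const (1:ℝ)) hmeasf ?_
    filter_upwards [hae] with ξ hξ
    exact (hpt ξ hξ).2
  have hmeasg : AEStronglyMeasurable (fun ξ : EuclideanSpace ℝ (Fin d) => ⟪ξ, μ⟫) σd :=
    (Continuous.inner continuous_id continuous_const).aestronglyMeasurable
  have hintg : Integrable (fun ξ : EuclideanSpace ℝ (Fin d) => ⟪ξ, μ⟫) σd := by
    refine Integrable.mono' (integrable_const (1:ℝ)) hmeasg ?_
    filter_upwards [hae] with ξ hξ
    rw [Real.norm_eq_abs]
    have := abs_real_inner_le_norm ξ μ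
    rwa [hξ, hμ, one_mul] at this
  -- symmetry: ∫ ⟪ξ,μ⟫ = 0
  have hzero : (∫ ξ, ⟪ξ, μ⟫ ∂σd) = 0 := by
    have hT := hinv ((LinearIsometryEquiv.neg ℝ : EuclideanSpace ℝ (Fin d) ≃ₗᵢ[ℝ] EuclideanSpace ℝ (Fin d)))
    have h1 : (∫ ξ, ⟪ξ, μ⟫ ∂σd) = ∫ ξ, ⟪-ξ, μ⟫ ∂σd := by
      conv_lhs => rw [← hT]
      rw [integral_map ((LinearIsometryEquiv.neg ℝ : EuclideanSpace ℝ (Fin d) ≃ₗᵢ[ℝ] EuclideanSpace ℝ (Fin d))).continuous.measurable.aemeasurable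
        (by rw [hT]; exact hmeasg)]
      rfl
    have h2 : (∫ ξ, ⟪-ξ, μ⟫ ∂σd) = - ∫ ξ, ⟪ξ, μ⟫ ∂σd := by
      rw [← integral_neg]
      congr 1; funext ξ; rw [inner_neg_left]
    linarith [h1, h2]
  -- conclude
  have hge : (∫ ξ, ⟪w • μ + (1 - w) • ξ, μ⟫ / ‖w • μ + (1 - w) • ξ‖ ∂σd)
      ≥ ∫ ξ, w + (1 - w) * ⟪ξ, μ⟫ ∂σd := by
    refine integral_mono_ae ((integrable_const w).add (hintg.const_mul _)) hintf ?_
    filter_upwards [hae] with ξ hξ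
    exact (hpt ξ hξ).1
  have : (∫ ξ, w + (1 - w) * ⟪ξ, μ⟫ ∂σd) = w := by
    rw [integral_add (integrable_const w) (hintg.const_mul _),
      integral_const, integral_const_mul, hzero]
    simp
  linarith [hge, this]
end

section
/- Let μ, ξ ∈ ℝ^d be unit vectors, let w ∈ (1/2, 1], and let v = w·μ + (1 - w)·ξ. Then the normalized mixture satisfies the deterministic concentration bound ‖v/‖v‖ - μ‖ ≤ 2·√(1 - w); in particular, as the mixing weight w tends to 1, the normalized samples converge to the mean direction μ uniformly over all realizations of ξ. -/
local notation "⟪" x ", " y "⟫_ℝ" => @inner ℝ _ _ x y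


/-- For unit vectors `μ, ξ ∈ ℝ^d` and a mixing weight `w ∈ (1/2, 1]`, the normalized
GAC mixture `v/‖v‖` with `v = w·μ + (1-w)·ξ` satisfies the deterministic
concentration bound `‖v/‖v‖ - μ‖ ≤ 2·√(1-w)`; in particular, as `w → 1` the
normalized samples converge to the mean direction `μ` uniformly over all
realizations of `ξ`. -/
theorem gac_normalized_concentration (d : ℕ)
    (μ ξ : EuclideanSpace ℝ (Fin d)) (hμ : ‖μ‖ = 1) (hξ : ‖ξ‖ = 1)
    (w : ℝ) (hw0 : 1 / 2 < w) (hw1 : w ≤ 1)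
    (v : EuclideanSpace ℝ (Fin d)) (hv : v = w • μ + (1 - w) • ξ) :
    ‖(‖v‖⁻¹ • v) - μ‖ ≤ 2 * Real.sqrt (1 - w) := by
  have hw' : 0 ≤ 1 - w := by linarith
  have hcs : |⟪ξ, μ⟫_ℝ| ≤ 1 := by
    have := abs_real_inner_le_norm ξ μ
    rwa [hμ, hξ, one_mul] at this
  have hinner : (2 * w - 1) ≤ ⟪v, μ⟫_ℝ := by
    rw [hv, inner_add_left, real_inner_smul_left, real_inner_smul_left,
      real_inner_self_eq_norm_sq, hμ]
    have h1 : -1 ≤ ⟪ξ, μ⟫_ℝ := by linarith [neg_abs_le ⟪ξ, μ⟫_ℝ]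
    nlinarith
  have hvpos : 0 < ‖v‖ := by
    have h1 : ‖w • μ‖ ≤ ‖v‖ + ‖(1 - w) • ξ‖ := by
      have : w • μ = v - (1 - w) • ξ := by rw [hv]; abel
      rw [this]; exact norm_sub_le _ _
    rw [norm_smul, norm_smul, hμ, hξ] at h1
    simp only [mul_one] at h1
    have hwabs : |w| = w := abs_of_pos (by linarith)
    have hwabs' : |1 - w| = 1 - w := abs_of_nonneg hw'
    rw [Real.norm_eq_abs, Real.norm_eq_abs, hwabs, hwabs'] at h1
    linarith
  have hvle : ‖v‖ ≤ 1 := by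
    rw [hv]
    calc ‖w • μ + (1 - w) • ξ‖ ≤ ‖w • μ‖ + ‖(1 - w) • ξ‖ := norm_add_le _ _
      _ = |w| * 1 + |1 - w| * 1 := by
          rw [norm_smul, norm_smul, hμ, hξ, Real.norm_eq_abs, Real.norm_eq_abs]
      _ = 1 := by rw [abs_of_pos (by linarith : (0:ℝ) < w), abs_of_nonneg hw']; ring
  set u := ‖v‖⁻¹ • v with hu
  have hnu : ‖u‖ = 1 := by
    rw [hu, norm_smul, Real.norm_eq_abs, abs_of_pos (inv_pos.mpr hvpos),
      inv_mul_cancel₀ hvpos.ne']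
  have hiu : (2 * w - 1) ≤ ⟪u, μ⟫_ℝ := by
    rw [hu, real_inner_smul_left]
    have hinv1 : 1 ≤ ‖v‖⁻¹ := by
      rw [le_inv_comm₀ one_pos hvpos]; simpa using hvle
    have hi0 : (0:ℝ) ≤ ⟪v, μ⟫_ℝ := by linarith
    calc (2 * w - 1) ≤ ⟪v, μ⟫_ℝ := hinner
      _ = 1 * ⟪v, μ⟫_ℝ := (one_mul _).symm
      _ ≤ ‖v‖⁻¹ * ⟪v, μ⟫_ℝ := mul_le_mul_of_nonneg_right hinv1 hi0
  have hsq : ‖u - μ‖ ^ 2 ≤ 4 * (1 - w) := by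
    have := norm_sub_sq_real u μ
    rw [hnu, hμ] at this
    rw [this]; nlinarith
  have h2 : 2 * Real.sqrt (1 - w) = Real.sqrt (4 * (1 - w)) := by
    rw [show (4:ℝ) * (1 - w) = 2 ^ 2 * (1 - w) by ring, Real.sqrt_mul (by positivity),
      Real.sqrt_sq (by norm_num : (0:ℝ) ≤ 2)]
  rw [h2]
  exact (Real.le_sqrt (norm_nonneg _) (by positivity)).mpr hsq
end
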